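/- Let (T,L) be a shadow-complete TAP instance where T is a k-wide tree with root r, let T_i be a principal subtree with edge set E_i, and let L' ⊆ L be a shadow-minimal set of links that covers E_i. Suppose ℓ ∈ L' is a cross-link with an endpoint v in T_i such that v has degree 2 in T. Then L' contains an up-link ℓ' having v as an endpoint and covering the edge between v and its child (in particular, v lies on the path in T from r to the other endpoint of ℓ'). -/

import Mathlib

/-!
Let `p` be the parent of `v` and `w` its unique child. The cross-link `ℓ = {v, x}` passes
through the root, hence through `p`, so `P_ℓ = {vp} ∪ P_{px}`. Some `ℓ' ∈ L'` covers the edge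
`vw`. If `v` were an inner vertex of `P_{ℓ'}`, then, as `v` has degree 2, `P_{ℓ'}` would use
both edges at `v`, in particular `vp`; the shadow `{p, x}` of `ℓ` would then violate
shadow-minimality of `ℓ, ℓ'`. So `ℓ' = {v, b}`, and since a path in a tree never turns back,
`P_{ℓ'}` leaves `v` through `w`, away from the root: `v` lies on the path from `r` to `b`.
-/

open scoped Classical

/-- `a` lies on the unique path in the tree `G` between the endpoints of the link `ℓ`. -/
def MemLinkPath {V : Type} (G : SimpleGraph V) (ℓ : Sym2 V) (a : V) : Prop :=
  ∃ u v : V, ℓ = s(u, v) ∧ G.dist u a + G.dist a v = G.dist u v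

/-- The edge set `P_ℓ` of the unique path in the tree `G` between the endpoints of `ℓ`. -/
def linkPath {V : Type} (G : SimpleGraph V) (ℓ : Sym2 V) : Set (Sym2 V) :=
  {e | e ∈ G.edgeSet ∧ ∀ a ∈ e, MemLinkPath G ℓ a}

/-- The link set `U` covers the edge set `F`. -/
def Covers {V : Type} (G : SimpleGraph V) (U : Set (Sym2 V)) (F : Set (Sym2 V)) : Prop :=
  F ⊆ ⋃ ℓ ∈ U, linkPath G ℓ

/-- `s` is a shadow of the link `ℓ`: both endpoints of `s` lie on the path `P_ℓ`. -/
def IsShadow {V : Type} (G : SimpleGraph V) (s ℓ : Sym2 V) : Prop :=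
  ∀ a ∈ s, MemLinkPath G ℓ a

/-- Links `ℓ₁`, `ℓ₂` are shadow-minimal: no (proper) shadow `s` of one of them, say `ℓ₁`,
satisfies `P_{ℓ₁} ∪ P_{ℓ₂} = P_s ∪ P_{ℓ₂}`. -/
def ShadowMinimalPair {V : Type} (G : SimpleGraph V) (ℓ₁ ℓ₂ : Sym2 V) : Prop :=
  ¬ ∃ s : Sym2 V, s ≠ ℓ₁ ∧ IsShadow G s ℓ₁ ∧
      linkPath G s ∪ linkPath G ℓ₂ = linkPath G ℓ₁ ∪ linkPath G ℓ₂

/-- A set of links is shadow-minimal if its links are pairwise shadow-minimal. -/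
def ShadowMinimalSet {V : Type} (G : SimpleGraph V) (L' : Finset (Sym2 V)) : Prop :=
  ∀ ℓ₁ ∈ L', ∀ ℓ₂ ∈ L', ℓ₁ ≠ ℓ₂ → ShadowMinimalPair G ℓ₁ ℓ₂

/-- `v` belongs to the principal subtree of the tree `G` rooted at `r` associated with the
child `c` of `r`. -/
def MemPrincipal {V : Type} (G : SimpleGraph V) (r c v : V) : Prop :=
  v = r ∨ G.dist r c + G.dist c v = G.dist r v

/-- Vertex set of the principal subtree of child `c`. -/
noncomputable def principalVerts {V : Type} [Fintype V] (G : SimpleGraph V) (r c : V) :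
    Finset V :=
  Finset.univ.filter (fun v => MemPrincipal G r c v)

/-- The leaves (degree-1 vertices) of the principal subtree of child `c`. -/
noncomputable def principalLeaves {V : Type} [Fintype V] (G : SimpleGraph V) (r c : V) :
    Finset V :=
  (principalVerts G r c).filter
    (fun v => ((principalVerts G r c).filter (fun w => G.Adj v w)).card = 1)

/-- The tree `G` is `k`-wide with root `r`: every principal subtree has at most `k`
leaves. -/
def KWide {V : Type} [Fintype V] (G : SimpleGraph V) (r : V) (k : ℕ) : Prop :=
  ∀ c : V, G.Adj r c → (principalLeaves G r c).card ≤ k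

/-- `u` and `v` lie in a common principal subtree of the tree `G` rooted at `r`. -/
def SameSubtree {V : Type} (G : SimpleGraph V) (r u v : V) : Prop :=
  ∃ c : V, G.Adj r c ∧ MemPrincipal G r c u ∧ MemPrincipal G r c v

/-- `ℓ` is a cross-link with respect to the root `r`. -/
def IsCrossLink {V : Type} (G : SimpleGraph V) (r : V) (ℓ : Sym2 V) : Prop :=
  ∃ u v : V, ℓ = s(u, v) ∧ u ≠ r ∧ v ≠ r ∧ ¬ SameSubtree G r u v

/-- `ℓ` is an in-link with respect to the root `r`: both endpoints lie in a common
principal subtree. -/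
def IsInLink {V : Type} (G : SimpleGraph V) (r : V) (ℓ : Sym2 V) : Prop :=
  ∃ u v : V, ℓ = s(u, v) ∧ SameSubtree G r u v

/-- `ℓ` is an up-link with respect to the root `r`: an in-link `{u,v}` such that `u` lies
on the path in `T` from `r` to `v`. -/
def IsUpLink {V : Type} (G : SimpleGraph V) (r : V) (ℓ : Sym2 V) : Prop :=
  IsInLink G r ℓ ∧ ∃ u v : V, ℓ = s(u, v) ∧ G.dist r u + G.dist u v = G.dist r v

/-- The edge set `E_c` of the principal subtree of child `c`. -/
def principalEdges {V : Type} (G : SimpleGraph V) (r c : V) : Set (Sym2 V) :=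
  {e | e ∈ G.edgeSet ∧ ∀ a ∈ e, MemPrincipal G r c a}

variable {V : Type} {G : SimpleGraph V} {u v w a b p x : V}

namespace SimpleGraph

/-- In a tree, `a` lies on the path from `u` to `v`. -/
def Between (G : SimpleGraph V) (u a v : V) : Prop :=
  G.dist u a + G.dist a v = G.dist u v

theorem Between.symm (h : G.Between u a v) : G.Between v a u := by
  unfold Between at *
  rw [dist_comm (u := v) (v := a), dist_comm (u := a) (v := u), dist_comm (u := v) (v := u)]
  omega

theorem between_self_left (u v : V) : G.Between u u v := by
  simp [Between]

theorem between_self_right (u v : V) : G.Between u v v := by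
  simp [Between]

theorem Adj.between_iff (h : G.Adj a w) : G.Between u a w ↔ G.dist u w = G.dist u a + 1 := by
  rw [Between, dist_eq_one_iff_adj.mpr h, eq_comm]

theorem Connected.between_trans (hG : G.Connected) (h₁ : G.Between u a b)
    (h₂ : G.Between u b v) : G.Between u a v := by
  have := hG.dist_triangle (u := u) (v := a) (w := v)
  have := hG.dist_triangle (u := a) (v := b) (w := v)
  unfold Between at *
  omega

theorem Connected.between_cancel_left (hG : G.Connected) (h₁ : G.Between u a b)
    (h₂ : G.Between u b v) : G.Between a b v := by
  have := hG.between_trans h₁ h₂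
  unfold Between at *
  omega

theorem Connected.exists_adj_between (hG : G.Connected) (huv : u ≠ v) :
    ∃ w, G.Adj u w ∧ G.Between u w v := by
  obtain ⟨_ | @⟨_, w, _, hadj, q⟩, hp⟩ := hG.exists_walk_length_eq_dist u v
  · exact absurd rfl huv
  · have := dist_le q
    have := hG.dist_triangle (u := u) (v := w) (w := v)
    rw [Walk.length_cons] at hp
    refine ⟨_, hadj, ?_⟩
    rw [Between, dist_eq_one_iff_adj.mpr hadj] at *
    omega

theorem IsTree.between_or_between_of_adj (hT : G.IsTree) (u : V) (h : G.Adj a w) :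
    G.Between u a w ∨ G.Between u w a := by
  rw [h.between_iff, h.symm.between_iff]
  exact (hT.dist_eq_dist_add_one_of_adj u h).symm

theorem IsTree.eq_of_adj_of_between (hT : G.IsTree) (ha : G.Adj v a) (hb : G.Adj v b)
    (hua : G.Between u a v) (hub : G.Between u b v) : a = b := by
  classical
  obtain ⟨P, hP, -⟩ := hT.connected.exists_path_of_dist u v
  have mem_P {a} (ha : G.Adj v a) (hua : G.Between u a v) : a ∈ P.support := by
    obtain ⟨Q, hQ, hQlen⟩ := hT.connected.exists_path_of_dist u a
    refine hT.isAcyclic.mem_support_of_ne_mem_support_of_adj_of_isPath hP hQ ha fun hv => ?_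
    have := (dist_le (Q.takeUntil v hv)).trans (Q.length_takeUntil_le_length hv)
    rw [ha.symm.between_iff] at hua
    omega
  rw [hT.isAcyclic.eq_penultimate_of_adj_end hP ha (mem_P ha hua),
    hT.isAcyclic.eq_penultimate_of_adj_end hP hb (mem_P hb hub)]

theorem IsTree.between_of_adj_of_ne (hT : G.IsTree) (hp : G.Adj v p) (hpv : G.Between u p v)
    (hw : G.Adj v w) (hwp : w ≠ p) : G.Between u v w :=
  (hT.between_or_between_of_adj u hw).resolve_right
    fun hwv => hwp (hT.eq_of_adj_of_between hw hp hwv hpv)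

theorem IsTree.between_of_adj_of_between (hT : G.IsTree) (hadj : G.Adj a w)
    (h₁ : G.Between u a w) (h₂ : G.Between a w b) : G.Between u a b := by
  have hG := hT.connected
  induction hn : G.dist w b generalizing a w with
  | zero =>
    rw [hG.dist_eq_zero_iff] at hn
    exact hn ▸ h₁
  | succ n ih =>
    obtain ⟨w', hww', hw'b⟩ := hG.exists_adj_between (u := w) (v := b) (by
      rintro rfl; simp at hn)
    have haw' : G.Between a w w' := (hG.between_cancel_left hw'b.symm h₂.symm).symm
    have hw'a : w' ≠ a := by
      rintro rfl
      simp [Between, dist_eq_one_iff_adj.mpr hadj] at haw'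
    -- `a` is the only neighbour of `w` closer to `u`, so the path to `b` moves on away from `u`.
    have hww'b : G.Between u w b :=
      ih hww' (hT.between_of_adj_of_ne hadj.symm h₁ hww' hw'a) hw'b (by
        rw [Between, dist_eq_one_iff_adj.mpr hww'] at hw'b; omega)
    exact hG.between_trans h₁ hww'b

theorem exists_adj_ne_of_degree_eq_two [Fintype (G.neighborSet v)] (hdeg : G.degree v = 2)
    (hp : G.Adj v p) : ∃ w, G.Adj v w ∧ w ≠ p ∧ ∀ z, G.Adj v z → z = p ∨ z = w := by
  classical
  have hcard : ((G.neighborFinset v).erase p).card = 1 := by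
    rw [Finset.card_erase_of_mem ((mem_neighborFinset G v p).mpr hp),
      card_neighborFinset_eq_degree, hdeg]
  obtain ⟨w, hw⟩ := Finset.card_eq_one.mp hcard
  have mem_erase z : z ∈ (G.neighborFinset v).erase p ↔ z ≠ p ∧ G.Adj v z := by simp
  have hwp := (mem_erase w).mp (hw ▸ Finset.mem_singleton_self w)
  refine ⟨w, hwp.2, hwp.1, fun z hz => or_iff_not_imp_left.mpr fun hzp => ?_⟩
  simpa [hw] using (mem_erase z).mpr ⟨hzp, hz⟩

theorem Connected.between_of_adj_of_degree_eq_two (hG : G.Connected)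
    [Fintype (G.neighborSet v)] (hdeg : G.degree v = 2) (h : G.Between a v b) (hva : v ≠ a)
    (hvb : v ≠ b) (hw : G.Adj v w) : G.Between a w b := by
  obtain ⟨n₁, hn₁, hn₁a⟩ := hG.exists_adj_between hva
  obtain ⟨n₂, hn₂, hn₂b⟩ := hG.exists_adj_between hvb
  have h₁ : G.Between a n₁ b := hG.between_trans hn₁a.symm h
  have h₂ : G.Between a n₂ b := (hG.between_trans hn₂b.symm h.symm).symm
  have hn₂n₁ : n₂ ≠ n₁ := by
    rintro rfl
    have := hn₁.symm.between_iff.mp hn₁a.symm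
    have := hn₂.between_iff.mp (hG.between_cancel_left hn₂b.symm h.symm).symm
    omega
  obtain ⟨n, -, -, hnbrs⟩ := exists_adj_ne_of_degree_eq_two hdeg hn₁
  rcases hnbrs w hw with rfl | rfl
  · exact h₁
  · exact (hnbrs n₂ hn₂).resolve_left hn₂n₁ ▸ h₂

theorem IsTree.between_of_between_of_ne (hT : G.IsTree) (hp : G.Adj v p)
    (hpx : G.Between v p x) (hz : G.Between v w x) (hwv : w ≠ v) : G.Between p w x := by
  have hG := hT.connected
  obtain ⟨n, hn, hnw⟩ := hG.exists_adj_between hwv.symm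
  have hnx : G.Between v n x := hG.between_trans hnw hz
  obtain rfl : n = p := hT.eq_of_adj_of_between hn hp hnx.symm hpx.symm
  exact hG.between_cancel_left hnw hz

end SimpleGraph

open SimpleGraph

theorem memLinkPath_mk_iff : MemLinkPath G s(u, v) a ↔ G.Between u a v := by
  refine ⟨fun ⟨u', v', huv, h⟩ => ?_, fun h => ⟨u, v, rfl, h⟩⟩
  rcases Sym2.eq_iff.mp huv with ⟨rfl, rfl⟩ | ⟨rfl, rfl⟩
  exacts [h, Between.symm h]

theorem mk_mem_linkPath_mk_iff :
    s(a, b) ∈ linkPath G s(u, v) ↔ G.Adj a b ∧ G.Between u a v ∧ G.Between u b v := by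
  simp [linkPath, memLinkPath_mk_iff]

theorem SimpleGraph.IsTree.linkPath_mk_eq_insert (hT : G.IsTree) (hp : G.Adj v p)
    (hpx : G.Between v p x) : linkPath G s(v, x) = insert s(v, p) (linkPath G s(p, x)) := by
  have hG := hT.connected
  have of_between_px {z} (hz : G.Between p z x) : G.Between v z x :=
    (hG.between_trans hz.symm hpx.symm).symm
  ext e
  induction e using Sym2.ind with | _ a b => ?_
  simp only [Set.mem_insert_iff, mk_mem_linkPath_mk_iff]
  constructor
  · rintro ⟨hab, ha, hb⟩
    by_cases hav : a = v
    · subst hav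
      exact .inl (by rw [hT.eq_of_adj_of_between hab hp hb.symm hpx.symm])
    by_cases hbv : b = v
    · subst hbv
      exact .inl (by rw [hT.eq_of_adj_of_between hab.symm hp ha.symm hpx.symm, Sym2.eq_swap])
    exact .inr ⟨hab, hT.between_of_between_of_ne hp hpx ha hav,
      hT.between_of_between_of_ne hp hpx hb hbv⟩
  · rintro (h | ⟨hab, ha, hb⟩)
    · rcases Sym2.eq_iff.mp h with ⟨rfl, rfl⟩ | ⟨rfl, rfl⟩
      exacts [⟨hp, between_self_left a x, hpx⟩, ⟨hp.symm, hpx, between_self_left b x⟩]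
    · exact ⟨hab, of_between_px ha, of_between_px hb⟩

/-- The witness is the shadow `{p, x}`: as `P_{vx} = {vp} ∪ P_{px}`, dropping `vp` loses nothing
that `ℓ` does not cover. -/
theorem SimpleGraph.IsTree.not_shadowMinimalPair (hT : G.IsTree) (hp : G.Adj v p)
    (hpx : G.Between v p x) {ℓ : Sym2 V} (hℓ : s(v, p) ∈ linkPath G ℓ) :
    ¬ ShadowMinimalPair G s(v, x) ℓ := by
  refine not_not.mpr ⟨s(p, x), fun h => hp.ne (Sym2.congr_left.mp h).symm, ?_, ?_⟩
  · simp only [IsShadow, Sym2.mem_iff, forall_eq_or_imp, forall_eq, memLinkPath_mk_iff]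
    exact ⟨hpx, between_self_right v x⟩
  · rw [hT.linkPath_mk_eq_insert hp hpx, Set.insert_union, Set.insert_eq_of_mem (.inr hℓ)]

theorem SimpleGraph.IsTree.mem_of_shadowMinimalPair (hT : G.IsTree) [Fintype (G.neighborSet v)]
    (hdeg : G.degree v = 2) (hp : G.Adj v p) (hpx : G.Between v p x) {ℓ : Sym2 V}
    (hvℓ : MemLinkPath G ℓ v) (hmin : ShadowMinimalPair G s(v, x) ℓ) : v ∈ ℓ := by
  induction ℓ using Sym2.ind with | _ a b => ?_
  by_contra hv
  simp only [Sym2.mem_iff, not_or] at hv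
  rw [memLinkPath_mk_iff] at hvℓ
  have hpab := hT.connected.between_of_adj_of_degree_eq_two hdeg hvℓ hv.1 hv.2 hp
  exact hT.not_shadowMinimalPair hp hpx (mk_mem_linkPath_mk_iff.mpr ⟨hp, hvℓ, hpab⟩) hmin

theorem IsCrossLink.exists_eq_mk {r : V} {ℓ : Sym2 V} (h : IsCrossLink G r ℓ) (hv : v ∈ ℓ) :
    ∃ x, ℓ = s(v, x) ∧ v ≠ r ∧ ¬ SameSubtree G r v x := by
  obtain ⟨a, b, rfl, har, hbr, hab⟩ := h
  rcases Sym2.mem_iff.mp hv with rfl | rfl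
  · exact ⟨b, rfl, har, hab⟩
  · exact ⟨a, Sym2.eq_swap, hbr, fun ⟨c, hc, hb, ha⟩ => hab ⟨c, hc, ha, hb⟩⟩

theorem SimpleGraph.IsTree.between_of_not_sameSubtree (hT : G.IsTree) {r : V} (hvr : v ≠ r)
    (h : ¬ SameSubtree G r v x) : G.Between v r x := by
  obtain ⟨c, hc, hcv⟩ := hT.connected.exists_adj_between hvr.symm
  rcases hT.between_or_between_of_adj x hc with hxrc | hxcr
  · exact (hT.between_of_adj_of_between hc hxrc hcv).symm
  · exact absurd ⟨c, hc, .inr hcv, .inr hxcr.symm⟩ h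

theorem stmt_13_general {V : Type} [Fintype V]
    (G : SimpleGraph V) [DecidableRel G.Adj] (hT : G.IsTree)
    (r : V) (c : V) (hc : G.Adj r c)
    (L' : Finset (Sym2 V)) (hMin : ShadowMinimalSet G L')
    (hCover : Covers G (↑L') (principalEdges G r c))
    (ℓ : Sym2 V) (hℓ : ℓ ∈ L') (hCross : IsCrossLink G r ℓ)
    (v : V) (hv : v ∈ ℓ) (hvc : MemPrincipal G r c v) (hdeg : G.degree v = 2) :
    ∃ ℓ' ∈ L', IsUpLink G r ℓ' ∧
      (∃ w' : V, ℓ' = s(v, w') ∧ G.dist r v + G.dist v w' = G.dist r w') ∧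
      ∀ w : V, G.Adj v w → G.dist r v + G.dist v w = G.dist r w →
        s(v, w) ∈ linkPath G ℓ' := by
  have hG := hT.connected
  obtain ⟨x, rfl, hvr, hvx⟩ := hCross.exists_eq_mk hv
  have hcv : G.Between r c v := hvc.resolve_left hvr
  obtain ⟨p, hvp, hpr⟩ := hG.exists_adj_between hvr
  have hpx : G.Between v p x := hG.between_trans hpr (hT.between_of_not_sameSubtree hvr hvx)
  obtain ⟨w, hvw, hwp, hnbrs⟩ := exists_adj_ne_of_degree_eq_two hdeg hvp
  have hrvw : G.Between r v w := hT.between_of_adj_of_ne hvp hpr.symm hvw hwp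
  obtain ⟨ℓ', hℓ', hvwℓ'⟩ : ∃ ℓ' ∈ L', s(v, w) ∈ linkPath G ℓ' := by
    simpa using hCover ⟨hvw, by simpa using ⟨hvc, .inr (hG.between_trans hcv hrvw)⟩⟩
  have hvℓ' : v ∈ ℓ' := by
    by_cases h : s(v, x) = ℓ'
    · exact h ▸ hv
    · exact hT.mem_of_shadowMinimalPair hdeg hvp hpx (hvwℓ'.2 v (Sym2.mem_mk_left v w))
        (hMin _ hℓ _ hℓ' h)
  obtain ⟨b, rfl⟩ := Sym2.mem_iff_exists.mp hvℓ'
  have hvwb : G.Between v w b := (mk_mem_linkPath_mk_iff.mp hvwℓ').2.2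
  have hrvb : G.Between r v b := hT.between_of_adj_of_between hvw hrvw hvwb
  refine ⟨s(v, b), hℓ', ⟨⟨v, b, rfl, c, hc, hvc, .inr (hG.between_trans hcv hrvb)⟩,
    v, b, rfl, hrvb⟩, ⟨b, rfl, hrvb⟩, fun w' hvw' hrvw' => ?_⟩
  have hw'p : w' ≠ p := by
    rintro rfl
    have := hvp.between_iff.mp hrvw'
    have := hvp.symm.between_iff.mp hpr.symm
    omega
  obtain rfl := (hnbrs w' hvw').resolve_left hw'p
  exact hvwℓ'

/-- Let `(T,L)` be a shadow-complete TAP instance on a `k`-wide tree with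
root `r`, let `T_c` be a principal subtree, and let `L' ⊆ L` be shadow-minimal and cover
the edges of `T_c`. If `ℓ ∈ L'` is a cross-link with an endpoint `v` in `T_c` of degree 2
in `T`, then `L'` contains an up-link `ℓ' = {v, w'}` with `v` lying on the path from `r`
to the other endpoint `w'`, covering the edge between `v` and its child. -/
theorem stmt_13 {V : Type} [Fintype V] [DecidableEq V]
    (G : SimpleGraph V) [DecidableRel G.Adj] (hT : G.IsTree)
    (r : V) (k : ℕ) (hWide : KWide G r k)
    (L : Finset (Sym2 V)) (hLlinks : ∀ ℓ ∈ L, ¬ ℓ.IsDiag)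
    (hComplete : ∀ ℓ ∈ L, ∀ s : Sym2 V, ¬ s.IsDiag → IsShadow G s ℓ → s ∈ L)
    (c : V) (hc : G.Adj r c)
    (L' : Finset (Sym2 V)) (hL' : L' ⊆ L) (hMin : ShadowMinimalSet G L')
    (hCover : Covers G (↑L') (principalEdges G r c))
    (ℓ : Sym2 V) (hℓ : ℓ ∈ L') (hCross : IsCrossLink G r ℓ)
    (v : V) (hv : v ∈ ℓ) (hvc : MemPrincipal G r c v) (hdeg : G.degree v = 2) :
    ∃ ℓ' ∈ L', IsUpLink G r ℓ' ∧
      (∃ w' : V, ℓ' = s(v, w') ∧ G.dist r v + G.dist v w' = G.dist r w') ∧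
      ∀ w : V, G.Adj v w → G.dist r v + G.dist v w = G.dist r w →
        s(v, w) ∈ linkPath G ℓ' :=
  stmt_13_general G hT r c hc L' hMin hCover ℓ hℓ hCross v hv hvc hdeg
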